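/- In the Baumslag–Gersten group G = ⟨x, y, t | y⁻¹xy = x², t⁻¹xt = y⟩, let v = t⁻¹ g t where g is a word in x^{±1}, y^{±1} equal to x^i in BS(1,2) with i ≠ 0. If D is a van Kampen diagram over the presentation of G for the word t⁻¹ g t g'⁻¹ where g' is a word in x^{±1}, y^{±1}, then every such diagram in which the two boundary t-edges are connected by a t-band of length k satisfies: g' = y^i in BS(1,2) and k = |i|. In particular every diagram demonstrating the pinch t⁻¹ x^i t = y^i contains at least |i| t-cells. -/

import Mathlib

/-! The Baumslag–Gersten group is the HNN extension of BS(1,2) identifying the infinite cyclic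
subgroups ⟨y⟩ and ⟨x⟩, so BS(1,2) embeds in it; there t⁻¹ g t = t⁻¹ x^i t = y^i, and the boundary
relation forces g' = y^i already in BS(1,2). For the count, the y-exponent sum is a homomorphism
to ℤ that kills the Baumslag–Solitar relator and sends the t-relator to -1. It is insensitive to
conjugation, takes the value -i on the boundary word, and so -i is a signed count of the t-cells. -/

def bsRels : Set (FreeGroup (Fin 2)) :=
  {(FreeGroup.of 1)⁻¹ * FreeGroup.of 0 * FreeGroup.of 1 *
    (FreeGroup.of 0 * FreeGroup.of 0)⁻¹}

abbrev BS := PresentedGroup bsRels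

def bsx : BS := PresentedGroup.of 0
def bsy : BS := PresentedGroup.of 1

/-- The Baumslag–Solitar relator y⁻¹xyx⁻² of the Baumslag–Gersten presentation,
as an element of the free group on x, y, t (indices 0, 1, 2). -/
def relBS : FreeGroup (Fin 3) :=
  (FreeGroup.of 1)⁻¹ * FreeGroup.of 0 * FreeGroup.of 1 *
    (FreeGroup.of 0 * FreeGroup.of 0)⁻¹

/-- The t-relator t⁻¹xty⁻¹; a 2-cell labelled by it is a t-cell. -/
def relT : FreeGroup (Fin 3) :=
  (FreeGroup.of 2)⁻¹ * FreeGroup.of 0 * FreeGroup.of 2 * (FreeGroup.of 1)⁻¹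

/-- Embedding of words in x, y into words in x, y, t. -/
def embXY : FreeGroup (Fin 2) →* FreeGroup (Fin 3) :=
  FreeGroup.lift fun j => FreeGroup.of j.castSucc

open Subgroup

section ZPowers

variable {G : Type*} [Group G]

theorem orderOf_eq_zero_of_orderOf_map_eq_zero {H : Type*} [Monoid H] (f : G →* H) {a : G}
    (h : orderOf (f a) = 0) : orderOf a = 0 :=
  Nat.eq_zero_of_zero_dvd (h ▸ orderOf_map_dvd f a)

theorem forall_mem_zpowers_mk (x : G) : ∀ a : zpowers x, a ∈ zpowers ⟨x, mem_zpowers x⟩ := by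
  simp_rw [Subtype.forall, mem_zpowers_iff, Subtype.ext_iff, SubgroupClass.coe_zpow]
  exact fun _ => id

noncomputable def zpowersMulEquiv {x y : G} (h : orderOf x = orderOf y) :
    zpowers x ≃* zpowers y :=
  mulEquivOfOrderOfEq (forall_mem_zpowers_mk x) (forall_mem_zpowers_mk y)
    (by rwa [orderOf_mk, orderOf_mk])

theorem zpowersMulEquiv_zpow {x y : G} (h : orderOf x = orderOf y) (k : ℤ) :
    zpowersMulEquiv h ⟨x ^ k, zpow_mem (mem_zpowers x) k⟩ =
      ⟨y ^ k, zpow_mem (mem_zpowers y) k⟩ := by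
  have : (⟨x ^ k, zpow_mem (mem_zpowers x) k⟩ : zpowers x) = ⟨x, mem_zpowers x⟩ ^ k := rfl
  rw [this, map_zpow, zpowersMulEquiv, mulEquivOfOrderOfEq_apply_gen]
  rfl

theorem HNNExtension.inv_t_mul_of_zpow_mul_t {x y : G} (h : orderOf y = orderOf x) (k : ℤ) :
    (t⁻¹ * of (x ^ k) * t : HNNExtension G (zpowers y) (zpowers x) (zpowersMulEquiv h)) =
      of (y ^ k) := by
  have := equiv_symm_eq_conj (φ := zpowersMulEquiv h) ⟨x ^ k, zpow_mem (mem_zpowers x) k⟩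
  rw [← this, (MulEquiv.symm_apply_eq _).2 (zpowersMulEquiv_zpow h k).symm]

end ZPowers

section BaumslagSolitar

variable {G : Type*} [Group G]

def bsLift (a b : G) (h : b⁻¹ * a * b = a * a) : BS →* G :=
  PresentedGroup.toGroup (f := ![a, b]) (by rintro r rfl; simp [h])

@[simp] theorem bsLift_bsx (a b : G) (h : b⁻¹ * a * b = a * a) : bsLift a b h bsx = a :=
  PresentedGroup.toGroup.of _

@[simp] theorem bsLift_bsy (a b : G) (h : b⁻¹ * a * b = a * a) : bsLift a b h bsy = b :=
  PresentedGroup.toGroup.of _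

theorem bsy_inv_mul_bsx_mul_bsy : bsy⁻¹ * bsx * bsy = bsx * bsx := by
  have h := PresentedGroup.one_of_mem (rels := bsRels) rfl
  simp only [map_mul, map_inv, mul_inv_eq_one] at h
  exact h

noncomputable def bsAffine : BS →* Equiv.Perm ℚ :=
  bsLift (Equiv.addRight 1) (Equiv.mulRight₀ 2⁻¹ (by norm_num)) (by ext q; simp; ring)

theorem orderOf_bsx : orderOf bsx = 0 := by
  refine orderOf_eq_zero_of_orderOf_map_eq_zero bsAffine (orderOf_eq_zero_iff'.2 fun n hn h => ?_)
  have := congr($h 0)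
  simp [bsAffine] at this
  omega

noncomputable def bsYExpSum : BS →* Multiplicative ℤ :=
  bsLift 1 (Multiplicative.ofAdd 1) (by simp)

theorem orderOf_bsy : orderOf bsy = 0 := by
  refine orderOf_eq_zero_of_orderOf_map_eq_zero bsYExpSum ?_
  simpa [bsYExpSum] using not_isOfFinAddOrder_of_isAddTorsionFree one_ne_zero

end BaumslagSolitar

section ProductsOfConjugates

variable {G H : Type*} [Group G] {N : ℕ} (c r : Fin N → G) (ε : Fin N → ℤ)

theorem map_prod_conj_zpow_eq_one [Group H] (f : G →* H) (hr : ∀ j, f (r j) = 1) :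
    f (List.ofFn fun j => c j * r j ^ ε j * (c j)⁻¹).prod = 1 := by
  rw [map_list_prod, List.map_ofFn]
  refine List.prod_eq_one fun a ha => ?_
  obtain ⟨j, rfl⟩ := List.mem_ofFn.1 ha
  simp [hr j]

theorem map_prod_conj_zpow [CommGroup H] (f : G →* H) :
    f (List.ofFn fun j => c j * r j ^ ε j * (c j)⁻¹).prod = ∏ j, f (r j) ^ ε j := by
  rw [map_list_prod, List.map_ofFn, List.prod_ofFn]
  refine Finset.prod_congr rfl fun j _ => ?_
  simp [mul_inv_cancel_comm]

end ProductsOfConjugates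

theorem natAbs_sum_le_card {ι : Type*} [Fintype ι] (p : ι → Prop) (a : ι → ℤ)
    (hp : ∀ j, ¬p j → a j = 0) (ha : ∀ j, |a j| ≤ 1) :
    (∑ j, a j).natAbs ≤ Nat.card {j // p j} := by
  classical
  have ha_natAbs (j : ι) : (a j).natAbs ≤ 1 := by
    have := ha j
    rw [Int.abs_eq_natAbs] at this
    omega
  rw [Nat.card_eq_fintype_card, Fintype.card_subtype,
    ← Finset.sum_filter_of_ne fun j _ => not_imp_comm.1 (hp j)]
  calc (∑ j ∈ Finset.univ.filter p, a j).natAbs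
      ≤ ∑ j ∈ Finset.univ.filter p, (a j).natAbs := Int.natAbs_sum_le _ _
    _ ≤ (Finset.univ.filter p).card • 1 := Finset.sum_le_card_nsmul _ _ _ fun j _ => ha_natAbs j
    _ = _ := by rw [smul_eq_mul, mul_one]

noncomputable abbrev BG : Type :=
  HNNExtension BS (zpowers bsy) (zpowers bsx)
    (zpowersMulEquiv (orderOf_bsy.trans orderOf_bsx.symm))

noncomputable def bgOf : FreeGroup (Fin 3) →* BG :=
  FreeGroup.lift ![HNNExtension.of bsx, HNNExtension.of bsy, HNNExtension.t]

theorem bgOf_embXY (w : FreeGroup (Fin 2)) :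
    bgOf (embXY w) = HNNExtension.of (PresentedGroup.mk bsRels w) := by
  have : bgOf.comp embXY = HNNExtension.of.comp (PresentedGroup.mk bsRels) := by
    ext j; fin_cases j <;> rfl
  exact DFunLike.congr_fun this w

theorem bgOf_relBS : bgOf relBS = 1 := by
  have := congrArg (HNNExtension.of : BS →* BG) bsy_inv_mul_bsx_mul_bsy
  simp only [map_mul, map_inv] at this
  simp [bgOf, relBS, this]

theorem bgOf_relT : bgOf relT = 1 := by
  have := HNNExtension.inv_t_mul_of_zpow_mul_t (orderOf_bsy.trans orderOf_bsx.symm) 1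
  simp only [zpow_one] at this
  simp [bgOf, relT, this]

def yExpSum : FreeGroup (Fin 3) →* Multiplicative ℤ :=
  FreeGroup.lift ![1, Multiplicative.ofAdd 1, 1]

theorem yExpSum_embXY (w : FreeGroup (Fin 2)) :
    yExpSum (embXY w) = bsYExpSum (PresentedGroup.mk bsRels w) := by
  have : yExpSum.comp embXY = bsYExpSum.comp (PresentedGroup.mk bsRels) := by
    ext j; fin_cases j <;> rfl
  exact DFunLike.congr_fun this w

theorem yExpSum_relBS : yExpSum relBS = 1 := by
  simp [yExpSum, relBS]

theorem yExpSum_relT : yExpSum relT = Multiplicative.ofAdd (-1) := by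
  simp [yExpSum, relT]

theorem bs_eq_bsy_zpow_of_bgOf_eq_one {i : ℤ} {g g' : FreeGroup (Fin 2)}
    (hg : PresentedGroup.mk bsRels g = bsx ^ i)
    (h : bgOf ((FreeGroup.of 2)⁻¹ * embXY g * FreeGroup.of 2 * (embXY g')⁻¹) = 1) :
    PresentedGroup.mk bsRels g' = bsy ^ i := by
  have hconj := HNNExtension.inv_t_mul_of_zpow_mul_t (orderOf_bsy.trans orderOf_bsx.symm) i
  simp only [map_mul, map_inv, bgOf_embXY, hg, mul_inv_eq_one] at h
  have : (HNNExtension.of (PresentedGroup.mk bsRels g') : BG) = HNNExtension.of (bsy ^ i) := by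
    rw [← h]
    simpa [bgOf] using hconj
  exact HNNExtension.of_injective _ this

/-- A van Kampen diagram is encoded by the expression of its boundary word as a product of
conjugates of relators, one factor for each 2-cell. -/
theorem stmt18 (i : ℤ) (g g' : FreeGroup (Fin 2))
    (hg : PresentedGroup.mk bsRels g = bsx ^ i)
    (N : ℕ) (c r : Fin N → FreeGroup (Fin 3)) (ε : Fin N → ℤ)
    (hr : ∀ j, (r j = relBS ∨ r j = relT) ∧ (ε j = 1 ∨ ε j = -1))
    (hprod : (FreeGroup.of 2)⁻¹ * embXY g * FreeGroup.of 2 * (embXY g')⁻¹ =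
      (List.ofFn fun j => c j * r j ^ ε j * (c j)⁻¹).prod) :
    PresentedGroup.mk bsRels g' = bsy ^ i ∧
      i.natAbs ≤ Nat.card {j : Fin N // r j = relT} := by
  have hg' : PresentedGroup.mk bsRels g' = bsy ^ i := by
    refine bs_eq_bsy_zpow_of_bgOf_eq_one hg
      (hprod ▸ map_prod_conj_zpow_eq_one c r ε bgOf fun j => ?_)
    rcases (hr j).1 with h | h <;> simp [h, bgOf_relBS, bgOf_relT]
  refine ⟨hg', ?_⟩
  have hexp : yExpSum ((FreeGroup.of 2)⁻¹ * embXY g * FreeGroup.of 2 * (embXY g')⁻¹) =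
      Multiplicative.ofAdd (-i) := by
    simp [yExpSum_embXY, hg, hg', bsYExpSum, ← ofAdd_zsmul]
  rw [hprod, map_prod_conj_zpow] at hexp
  have hcount := natAbs_sum_le_card (fun j => r j = relT)
    (fun j => Multiplicative.toAdd (yExpSum (r j) ^ ε j)) ?_ ?_
  · rwa [← toAdd_prod, hexp, toAdd_ofAdd, Int.natAbs_neg] at hcount
  · intro j hj
    simp [(hr j).1.resolve_right hj, yExpSum_relBS]
  · intro j
    rcases hr j with ⟨h | h, e | e⟩ <;> simp [h, e, yExpSum_relBS, yExpSum_relT]
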